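/- arXiv:2305.01350 — 3 statements merged into one kernel-verified Lean document; each statement's English description precedes it below -/
import Mathlib

section
/- Let κ₀ ∈ (0,1] and let h and f be Bernoulli densities with success probabilities p_h, p_f ∈ [0,1] respectively. Then d_{κ₀}(h,f) ≤ 1 + 1/κ₀, and this upper bound is attained if and only if |p_f − p_h| = 1 (i.e. either p_f = 0 and p_h = 1, or p_f = 1 and p_h = 0). -/
open MeasureTheory Filter Real
open scoped ENNReal BigOperators

noncomputable section

/-- The Bernoulli density with success probability `p`: `bern p true = p`,
`bern p false = 1 - p`. -/
def bern (p : ℝ) (y : Bool) : ℝ := if y then p else 1 - p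

/-- The density power divergence `d_κ(f_p, f_q)` between the Bernoulli densities with
success probabilities `p` and `q`, for tuning parameter `κ > 0`.  Powers are real powers
(`Real.rpow`). -/
def dpd (κ p q : ℝ) : ℝ :=
  ∑ y : Bool, (bern q y ^ (1 + κ) - (1 + 1 / κ) * bern p y * bern q y ^ κ
    + (1 / κ) * bern p y ^ (1 + κ))

lemma rpow_le_self {x κ : ℝ} (hx0 : 0 ≤ x) (hx1 : x ≤ 1) (hκ : 0 < κ) :
    x ^ (1 + κ) ≤ x := by
  rcases eq_or_lt_of_le hx0 with h | h
  · rw [← h, Real.zero_rpow (by positivity)]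
  · calc x ^ (1 + κ) ≤ x ^ (1:ℝ) :=
        Real.rpow_le_rpow_of_exponent_ge h hx1 (by linarith)
    _ = x := Real.rpow_one x

lemma rpow_eq_self_iff {x κ : ℝ} (hx0 : 0 ≤ x) (hx1 : x ≤ 1) (hκ : 0 < κ) :
    x ^ (1 + κ) = x ↔ x = 0 ∨ x = 1 := by
  constructor
  · intro h
    by_contra hc
    push_neg at hc
    have h0 : 0 < x := lt_of_le_of_ne hx0 (Ne.symm hc.1)
    have h1 : x < 1 := lt_of_le_of_ne hx1 hc.2
    have hlt := Real.rpow_lt_rpow_of_exponent_gt h0 h1 (by linarith : (1:ℝ) < 1 + κ)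
    rw [Real.rpow_one] at hlt
    linarith [h ▸ hlt]
  · rintro (rfl | rfl)
    · rw [Real.zero_rpow (by positivity)]
    · rw [Real.one_rpow]

/-- for `κ₀ ∈ (0,1]` and Bernoulli densities with success probabilities
`p_h, p_f ∈ [0,1]`, the density power divergence is at most `1 + 1/κ₀`, with equality
iff `|p_f - p_h| = 1`. -/
theorem dpd_le_and_eq_iff (κ₀ ph pf : ℝ) (hκ : κ₀ ∈ Set.Ioc (0 : ℝ) 1)
    (hph : ph ∈ Set.Icc (0 : ℝ) 1) (hpf : pf ∈ Set.Icc (0 : ℝ) 1) :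
    dpd κ₀ ph pf ≤ 1 + 1 / κ₀ ∧ (dpd κ₀ ph pf = 1 + 1 / κ₀ ↔ |pf - ph| = 1) := by
  obtain ⟨hκ0, hκ1⟩ := hκ
  obtain ⟨hph0, hph1⟩ := hph
  obtain ⟨hpf0, hpf1⟩ := hpf
  have hd : dpd κ₀ ph pf =
      (pf ^ (1 + κ₀) - (1 + 1 / κ₀) * ph * pf ^ κ₀ + (1 / κ₀) * ph ^ (1 + κ₀))
      + ((1 - pf) ^ (1 + κ₀) - (1 + 1 / κ₀) * (1 - ph) * (1 - pf) ^ κ₀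
        + (1 / κ₀) * (1 - ph) ^ (1 + κ₀)) := by
    simp [dpd, bern, Fintype.sum_bool]
  have h1 : pf ^ (1 + κ₀) ≤ pf := rpow_le_self hpf0 hpf1 hκ0
  have h2 : (1 - pf) ^ (1 + κ₀) ≤ 1 - pf :=
    rpow_le_self (by linarith) (by linarith) hκ0
  have h3 : ph ^ (1 + κ₀) ≤ ph := rpow_le_self hph0 hph1 hκ0
  have h4 : (1 - ph) ^ (1 + κ₀) ≤ 1 - ph :=
    rpow_le_self (by linarith) (by linarith) hκ0
  have hcpos : (0:ℝ) < 1 + 1 / κ₀ := by positivity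
  have hB1 : (0:ℝ) ≤ ph * pf ^ κ₀ := by positivity
  have hB2 : (0:ℝ) ≤ (1 - ph) * (1 - pf) ^ κ₀ := by
    have : (0:ℝ) ≤ (1 - pf) ^ κ₀ := Real.rpow_nonneg (by linarith) _
    exact mul_nonneg (by linarith) this
  have hBge : (0:ℝ) ≤ (1 + 1 / κ₀) * (ph * pf ^ κ₀ + (1 - ph) * (1 - pf) ^ κ₀) := by
    apply mul_nonneg hcpos.le; linarith
  have hCle : (1 / κ₀) * (ph ^ (1 + κ₀) + (1 - ph) ^ (1 + κ₀)) ≤ (1 / κ₀) * 1 := by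
    apply mul_le_mul_of_nonneg_left (by linarith) (by positivity)
  have hle : dpd κ₀ ph pf ≤ 1 + 1 / κ₀ := by
    rw [hd]; nlinarith [hBge, hCle]
  refine ⟨hle, ?_, ?_⟩
  · intro heq
    rw [hd] at heq
    -- the middle term vanishes and the first sum equals 1
    have hBzero : ph * pf ^ κ₀ + (1 - ph) * (1 - pf) ^ κ₀ = 0 := by
      nlinarith [hCle, hcpos]
    have hA1 : pf ^ (1 + κ₀) = pf := by nlinarith [hCle]
    have hB1z : ph * pf ^ κ₀ = 0 := by linarith
    have hB2z : (1 - ph) * (1 - pf) ^ κ₀ = 0 := by linarith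
    have hpf01 : pf = 0 ∨ pf = 1 := (rpow_eq_self_iff hpf0 hpf1 hκ0).1 hA1
    rcases hpf01 with rfl | rfl
    · have : ((1:ℝ) - 0) ^ κ₀ = 1 := by norm_num
      rw [this, mul_one] at hB2z
      have : ph = 1 := by linarith
      rw [this]; norm_num
    · have : (1:ℝ) ^ κ₀ = 1 := Real.one_rpow _
      rw [this, mul_one] at hB1z
      rw [hB1z]; norm_num
  · intro habs
    have hne : (1 : ℝ) + κ₀ ≠ 0 := by positivity
    have hκne : κ₀ ≠ 0 := ne_of_gt hκ0
    rcases abs_eq (by norm_num : (0:ℝ) ≤ 1) |>.1 habs with h | h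
    · have hpf' : pf = 1 := by linarith
      have hph' : ph = 0 := by linarith
      subst hpf'; subst hph'
      rw [hd]
      norm_num [Real.zero_rpow hne, Real.zero_rpow hκne]
      all_goals ring
    · have hpf' : pf = 0 := by linarith
      have hph' : ph = 1 := by linarith
      subst hpf'; subst hph'
      rw [hd]
      norm_num [Real.zero_rpow hne, Real.zero_rpow hκne]
      all_goals ring

end
end

section
/- (Fisher consistency.) Let κ₀ > 0, let (Ω, 𝒜, ℙ) be a probability space, let X : Ω → L²([0,1]) be Borel measurable, let H : ℝ → (0,1) be strictly increasing (hence injective), and let β₀, β ∈ L²([0,1]). Define M(β, κ₀) = 𝔼[d_{κ₀}(f_{H(⟨X,β₀⟩)}, f_{H(⟨X,β⟩)})]. Then M(β₀, κ₀) = 0, M(β, κ₀) ≥ 0 for every β, and if ℙ(⟨X, β − β₀⟩ = 0) < 1 then M(β, κ₀) > 0. -/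
/-!
Each summand `q ^ (1+κ) - (1 + 1/κ) p q ^ κ + (1/κ) p ^ (1+κ)` of the divergence is `κ⁻¹`
times the gap in the weighted AM–GM inequality for `p ^ (1+κ)` and `q ^ (1+κ)` with weights
`1/(1+κ)` and `κ/(1+κ)`; so it is nonnegative and vanishes exactly when `p = q`. As `H` is injective, the
integrand is therefore positive exactly off `{⟪X, β - β₀⟫ = 0}`, and being bounded, it has
positive expectation when that set has probability less than one.
-/

open MeasureTheory Filter Real
open scoped ENNReal BigOperators RealInnerProductSpace

noncomputable section

/-- `L²([0,1])`, realized as the `Lp`-space of square-integrable real functions for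
Lebesgue measure restricted to `[0,1]`. -/
abbrev L2 : Type := MeasureTheory.Lp ℝ 2 (MeasureTheory.volume.restrict (Set.Icc (0 : ℝ) 1))

def dpdSummand (κ p q : ℝ) : ℝ :=
  q ^ (1 + κ) - (1 + 1 / κ) * p * q ^ κ + (1 / κ) * p ^ (1 + κ)

theorem dpd_eq_add (κ p q : ℝ) :
    dpd κ p q = dpdSummand κ p q + dpdSummand κ (1 - p) (1 - q) := by
  simp only [dpd, dpdSummand, Fintype.sum_bool, bern, if_true, Bool.false_eq_true, if_false]

section Summand

variable {κ p q : ℝ}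

theorem dpdSummand_self (hκ : 0 < κ) (p : ℝ) : dpdSummand κ p p = 0 := by
  have hsplit : p ^ (1 + κ) = p * p ^ κ := by
    rcases eq_or_ne p 0 with rfl | hp
    · simp [zero_rpow hκ.ne', zero_rpow (by linarith : 1 + κ ≠ 0)]
    · rw [add_comm, rpow_add_one hp, mul_comm]
  rw [dpdSummand, hsplit]
  field_simp
  ring

theorem mul_rpow_lt_of_ne (hκ : 0 < κ) (hp : 0 ≤ p) (hq : 0 ≤ q) (hne : p ≠ q) :
    (1 + κ) * (p * q ^ κ) < p ^ (1 + κ) + κ * q ^ (1 + κ) := by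
  have hκ1 : 0 < 1 + κ := by linarith
  have hamgm := (geom_mean_lt_arith_mean2_weighted_iff_of_pos (one_div_pos.2 hκ1)
    (div_pos hκ hκ1) (rpow_nonneg hp (1 + κ)) (rpow_nonneg hq (1 + κ))
    (by field_simp)).2 (by rwa [Ne, rpow_left_inj hp hq hκ1.ne'])
  rw [← rpow_mul hp, ← rpow_mul hq, mul_one_div_cancel hκ1.ne', rpow_one,
    mul_div_cancel₀ _ hκ1.ne'] at hamgm
  calc (1 + κ) * (p * q ^ κ)
      < (1 + κ) * (1 / (1 + κ) * p ^ (1 + κ) + κ / (1 + κ) * q ^ (1 + κ)) := by gcongr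
    _ = p ^ (1 + κ) + κ * q ^ (1 + κ) := by field_simp

theorem dpdSummand_pos (hκ : 0 < κ) (hp : 0 ≤ p) (hq : 0 ≤ q) (hne : p ≠ q) :
    0 < dpdSummand κ p q := by
  have hamgm := mul_rpow_lt_of_ne hκ hp hq hne
  have hκ_mul :
      κ * dpdSummand κ p q = p ^ (1 + κ) + κ * q ^ (1 + κ) - (1 + κ) * (p * q ^ κ) := by
    rw [dpdSummand]
    field_simp
    ring
  exact pos_of_mul_pos_right (by linarith) hκ.le

theorem dpdSummand_nonneg (hκ : 0 < κ) (hp : 0 ≤ p) (hq : 0 ≤ q) : 0 ≤ dpdSummand κ p q := by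
  rcases eq_or_ne p q with rfl | hne
  · exact (dpdSummand_self hκ p).ge
  · exact (dpdSummand_pos hκ hp hq hne).le

theorem dpdSummand_le (hκ : 0 < κ) (hp : p ∈ Set.Icc (0 : ℝ) 1)
    (hq : q ∈ Set.Icc (0 : ℝ) 1) : dpdSummand κ p q ≤ 1 + 1 / κ := by
  have hκ1 : 0 ≤ 1 + κ := by linarith
  have hcross : 0 ≤ (1 + 1 / κ) * p * q ^ κ :=
    mul_nonneg (mul_nonneg (by positivity) hp.1) (rpow_nonneg hq.1 κ)
  have hp1 : 1 / κ * p ^ (1 + κ) ≤ 1 / κ * 1 :=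
    mul_le_mul_of_nonneg_left (rpow_le_one hp.1 hp.2 hκ1) (by positivity)
  rw [dpdSummand]
  linarith [rpow_le_one hq.1 hq.2 hκ1]

end Summand

section Dpd

variable {κ p q : ℝ}

theorem dpd_self (hκ : 0 < κ) (p : ℝ) : dpd κ p p = 0 := by
  rw [dpd_eq_add, dpdSummand_self hκ, dpdSummand_self hκ, add_zero]

theorem dpd_nonneg (hκ : 0 < κ) (hp : p ∈ Set.Icc (0 : ℝ) 1) (hq : q ∈ Set.Icc (0 : ℝ) 1) :
    0 ≤ dpd κ p q := by
  rw [dpd_eq_add]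
  exact add_nonneg (dpdSummand_nonneg hκ hp.1 hq.1)
    (dpdSummand_nonneg hκ (sub_nonneg.2 hp.2) (sub_nonneg.2 hq.2))

theorem dpd_pos (hκ : 0 < κ) (hp : p ∈ Set.Icc (0 : ℝ) 1) (hq : q ∈ Set.Icc (0 : ℝ) 1)
    (hne : p ≠ q) : 0 < dpd κ p q := by
  rw [dpd_eq_add]
  exact add_pos_of_pos_of_nonneg (dpdSummand_pos hκ hp.1 hq.1 hne)
    (dpdSummand_nonneg hκ (sub_nonneg.2 hp.2) (sub_nonneg.2 hq.2))

theorem dpd_le (hκ : 0 < κ) (hp : p ∈ Set.Icc (0 : ℝ) 1) (hq : q ∈ Set.Icc (0 : ℝ) 1) :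
    dpd κ p q ≤ 2 * (1 + 1 / κ) := by
  rw [dpd_eq_add, two_mul]
  exact add_le_add (dpdSummand_le hκ hp hq)
    (dpdSummand_le hκ (Set.Icc.mem_iff_one_sub_mem.mp hp) (Set.Icc.mem_iff_one_sub_mem.mp hq))

theorem measurable_dpd (κ : ℝ) : Measurable fun x : ℝ × ℝ => dpd κ x.1 x.2 := by
  simp only [dpd, Fintype.sum_bool, bern, if_true, Bool.false_eq_true, if_false]
  fun_prop

end Dpd

section Expectation

variable {Ω : Type*} [MeasurableSpace Ω] {μ : Measure Ω} {κ : ℝ} {U V : Ω → ℝ}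

theorem integrable_dpd [IsFiniteMeasure μ] (hκ : 0 < κ) (hU : Measurable U) (hV : Measurable V)
    (hU01 : ∀ ω, U ω ∈ Set.Icc (0 : ℝ) 1) (hV01 : ∀ ω, V ω ∈ Set.Icc (0 : ℝ) 1) :
    Integrable (fun ω => dpd κ (U ω) (V ω)) μ := by
  refine .of_bound ((measurable_dpd κ).comp (hU.prodMk hV)).aestronglyMeasurable
    (2 * (1 + 1 / κ)) (ae_of_all _ fun ω => ?_)
  rw [norm_of_nonneg (dpd_nonneg hκ (hU01 ω) (hV01 ω))]
  exact dpd_le hκ (hU01 ω) (hV01 ω)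

theorem integral_dpd_nonneg (hκ : 0 < κ) (hU01 : ∀ ω, U ω ∈ Set.Icc (0 : ℝ) 1)
    (hV01 : ∀ ω, V ω ∈ Set.Icc (0 : ℝ) 1) : 0 ≤ ∫ ω, dpd κ (U ω) (V ω) ∂μ :=
  integral_nonneg fun ω => dpd_nonneg hκ (hU01 ω) (hV01 ω)

theorem integral_dpd_pos [IsFiniteMeasure μ] (hκ : 0 < κ) (hU : Measurable U) (hV : Measurable V)
    (hU01 : ∀ ω, U ω ∈ Set.Icc (0 : ℝ) 1) (hV01 : ∀ ω, V ω ∈ Set.Icc (0 : ℝ) 1)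
    (hne : 0 < μ {ω | U ω ≠ V ω}) : 0 < ∫ ω, dpd κ (U ω) (V ω) ∂μ := by
  rw [integral_pos_iff_support_of_nonneg (fun ω => dpd_nonneg hκ (hU01 ω) (hV01 ω))
    (integrable_dpd hκ hU hV hU01 hV01)]
  exact hne.trans_le (measure_mono fun ω hω => (dpd_pos hκ (hU01 ω) (hV01 ω) hω).ne')

end Expectation

/-- Fisher consistency: with `M(β,κ₀) = 𝔼[d_{κ₀}(f_{H⟨X,β₀⟩}, f_{H⟨X,β⟩})]`,
one has `M(β₀,κ₀) = 0`, `M(β,κ₀) ≥ 0` for all `β`, and `M(β,κ₀) > 0` whenever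
`ℙ(⟨X, β - β₀⟩ = 0) < 1`. -/
theorem fisher_consistency {Ω : Type*} [MeasurableSpace Ω] (ℙ : Measure Ω)
    [IsProbabilityMeasure ℙ] [MeasurableSpace L2] [BorelSpace L2]
    (κ₀ : ℝ) (hκ₀ : 0 < κ₀) (X : Ω → L2) (hX : Measurable X)
    (H : ℝ → ℝ) (hH : ∀ x, H x ∈ Set.Ioo (0 : ℝ) 1) (hmono : StrictMono H)
    (β₀ : L2) :
    (∫ ω, dpd κ₀ (H ⟪X ω, β₀⟫) (H ⟪X ω, β₀⟫) ∂ℙ) = 0 ∧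
    (∀ β : L2, 0 ≤ ∫ ω, dpd κ₀ (H ⟪X ω, β₀⟫) (H ⟪X ω, β⟫) ∂ℙ) ∧
    (∀ β : L2, ℙ {ω | ⟪X ω, β - β₀⟫ = 0} < 1 →
      0 < ∫ ω, dpd κ₀ (H ⟪X ω, β₀⟫) (H ⟪X ω, β⟫) ∂ℙ) := by
  have hH01 : ∀ x, H x ∈ Set.Icc (0 : ℝ) 1 := fun x => Set.Ioo_subset_Icc_self (hH x)
  have hmeas : ∀ β : L2, Measurable fun ω => ⟪X ω, β⟫ := fun β =>
    (continuous_id.inner continuous_const).measurable.comp hX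
  have hHmeas : ∀ β : L2, Measurable fun ω => H ⟪X ω, β⟫ := fun β =>
    hmono.monotone.measurable.comp (hmeas β)
  refine ⟨by simp [dpd_self hκ₀],
    fun β => integral_dpd_nonneg hκ₀ (fun _ => hH01 _) (fun _ => hH01 _), fun β hlt => ?_⟩
  have hsupp : {ω | ⟪X ω, β - β₀⟫ = 0}ᶜ = {ω | H ⟪X ω, β₀⟫ ≠ H ⟪X ω, β⟫} := by
    ext ω
    simp only [Set.mem_compl_iff, Set.mem_ofPred_eq, inner_sub_right, sub_eq_zero,
      hmono.injective.ne_iff, ne_comm]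
  refine integral_dpd_pos hκ₀ (hHmeas β₀) (hHmeas β) (fun _ => hH01 _) (fun _ => hH01 _) ?_
  rw [← hsupp, prob_compl_eq_one_sub (measurableSet_eq_fun (hmeas _) measurable_const)]
  exact tsub_pos_of_lt hlt

end
end

section
/- Let κ₀ > 0, let (Ω, 𝒜, ℙ) be a probability space, let X : Ω → L²([0,1]) be Borel measurable with ℙ(‖X‖_{L²} ≤ C) = 1 for some C < ∞, let H : ℝ → (0,1) be continuous, and let β₀ ∈ L²([0,1]). Then the map β ↦ M(β, κ₀) := 𝔼[d_{κ₀}(f_{H(⟨X,β₀⟩)}, f_{H(⟨X,β⟩)})] is continuous on L²([0,1]) with respect to the L² norm. -/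
open MeasureTheory Filter Real
open scoped ENNReal BigOperators RealInnerProductSpace

noncomputable section

lemma dpd_eq (κ p q : ℝ) : dpd κ p q =
    (q ^ (1 + κ) - (1 + 1 / κ) * p * q ^ κ + (1 / κ) * p ^ (1 + κ))
    + ((1 - q) ^ (1 + κ) - (1 + 1 / κ) * (1 - p) * (1 - q) ^ κ
      + (1 / κ) * (1 - p) ^ (1 + κ)) := by
  simp [dpd, bern, Fintype.sum_bool]
  try ring

lemma contAt_dpd {α : Type*} [TopologicalSpace α] (κ : ℝ) {f g : α → ℝ} {x : α}
    (hf : ContinuousAt f x) (hg : ContinuousAt g x)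
    (hfx : f x ∈ Set.Ioo (0:ℝ) 1) (hgx : g x ∈ Set.Ioo (0:ℝ) 1) :
    ContinuousAt (fun a => dpd κ (f a) (g a)) x := by
  simp only [dpd_eq]
  have hf' : ContinuousAt (fun a => 1 - f a) x := continuousAt_const.sub hf
  have hg' : ContinuousAt (fun a => 1 - g a) x := continuousAt_const.sub hg
  have h1 : ContinuousAt (fun a => g a ^ (1 + κ)) x := hg.rpow_const (Or.inl hgx.1.ne')
  have h2 : ContinuousAt (fun a => g a ^ κ) x := hg.rpow_const (Or.inl hgx.1.ne')
  have h3 : ContinuousAt (fun a => f a ^ (1 + κ)) x := hf.rpow_const (Or.inl hfx.1.ne')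
  have h4 : ContinuousAt (fun a => (1 - g a) ^ (1 + κ)) x :=
    hg'.rpow_const (Or.inl (sub_ne_zero_of_ne hgx.2.ne'))
  have h5 : ContinuousAt (fun a => (1 - g a) ^ κ) x :=
    hg'.rpow_const (Or.inl (sub_ne_zero_of_ne hgx.2.ne'))
  have h6 : ContinuousAt (fun a => (1 - f a) ^ (1 + κ)) x :=
    hf'.rpow_const (Or.inl (sub_ne_zero_of_ne hfx.2.ne'))
  exact ((h1.sub ((continuousAt_const.mul hf).mul h2)).add (continuousAt_const.mul h3)).add
    ((h4.sub ((continuousAt_const.mul hf').mul h5)).add (continuousAt_const.mul h6))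

lemma dpd_bound (κ : ℝ) (hκ : 0 < κ) {p q : ℝ} (hp : p ∈ Set.Ioo (0:ℝ) 1)
    (hq : q ∈ Set.Ioo (0:ℝ) 1) : |dpd κ p q| ≤ 4 + 4 / κ := by
  rw [dpd_eq]
  have hκ' : 0 < 1 / κ := by positivity
  obtain ⟨hp0, hp1⟩ := hp
  obtain ⟨hq0, hq1⟩ := hq
  have e1 : (0:ℝ) ≤ q ^ (1 + κ) := rpow_nonneg hq0.le _
  have e2 : q ^ (1 + κ) ≤ 1 := rpow_le_one hq0.le hq1.le (by linarith)
  have e3 : (0:ℝ) ≤ q ^ κ := rpow_nonneg hq0.le _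
  have e4 : q ^ κ ≤ 1 := rpow_le_one hq0.le hq1.le hκ.le
  have e5 : (0:ℝ) ≤ p ^ (1 + κ) := rpow_nonneg hp0.le _
  have e6 : p ^ (1 + κ) ≤ 1 := rpow_le_one hp0.le hp1.le (by linarith)
  have f1 : (0:ℝ) ≤ (1-q) ^ (1 + κ) := rpow_nonneg (by linarith) _
  have f2 : (1-q) ^ (1 + κ) ≤ 1 := rpow_le_one (by linarith) (by linarith) (by linarith)
  have f3 : (0:ℝ) ≤ (1-q) ^ κ := rpow_nonneg (by linarith) _
  have f4 : (1-q) ^ κ ≤ 1 := rpow_le_one (by linarith) (by linarith) hκ.le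
  have f5 : (0:ℝ) ≤ (1-p) ^ (1 + κ) := rpow_nonneg (by linarith) _
  have f6 : (1-p) ^ (1 + κ) ≤ 1 := rpow_le_one (by linarith) (by linarith) (by linarith)
  have A0 : (0:ℝ) ≤ (1 + 1/κ) * p * q ^ κ := by positivity
  have A1 : (1 + 1/κ) * p * q ^ κ ≤ 1 + 1/κ := by
    nlinarith [mul_nonneg hp0.le e3, mul_le_one₀ hp1.le e3 e4]
  have B0 : (0:ℝ) ≤ (1 + 1/κ) * (1-p) * (1-q) ^ κ := by
    have : (0:ℝ) ≤ 1 - p := by linarith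
    positivity
  have B1 : (1 + 1/κ) * (1-p) * (1-q) ^ κ ≤ 1 + 1/κ := by
    nlinarith [mul_nonneg (by linarith : (0:ℝ) ≤ 1-p) f3,
      mul_le_one₀ (by linarith : (1:ℝ)-p ≤ 1) f3 f4]
  have C1 : 1/κ * p ^ (1+κ) ≤ 1/κ := by nlinarith
  have C0 : (0:ℝ) ≤ 1/κ * p ^ (1+κ) := by positivity
  have D1 : 1/κ * (1-p) ^ (1+κ) ≤ 1/κ := by nlinarith
  have D0 : (0:ℝ) ≤ 1/κ * (1-p) ^ (1+κ) := by positivity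
  have key : (4:ℝ) + 4 / κ = 4 + 4 * (1/κ) := by ring
  rw [abs_le, key]
  constructor <;> linarith

set_option synthInstance.maxHeartbeats 1000000 in
/-- if `X` is a Borel measurable random element of `L²([0,1])` which is almost
surely bounded in norm, and `H : ℝ → (0,1)` is continuous, then the population objective
`β ↦ M(β,κ₀) = 𝔼[d_{κ₀}(f_{H⟨X,β₀⟩}, f_{H⟨X,β⟩})]` is continuous on `L²([0,1])`. -/
theorem M_continuous {Ω : Type*} [MeasurableSpace Ω] (ℙ : Measure Ω)
    [IsProbabilityMeasure ℙ] [MeasurableSpace L2] [BorelSpace L2]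
    (κ₀ : ℝ) (hκ₀ : 0 < κ₀) (X : Ω → L2) (hX : Measurable X)
    (C : ℝ) (hXbdd : ℙ {ω | ‖X ω‖ ≤ C} = 1)
    (H : ℝ → ℝ) (hH : ∀ x, H x ∈ Set.Ioo (0 : ℝ) 1) (hHcont : Continuous H)
    (β₀ : L2) :
    Continuous fun β : L2 => ∫ ω, dpd κ₀ (H ⟪X ω, β₀⟫) (H ⟪X ω, β⟫) ∂ℙ := by
  rw [continuous_iff_continuousAt]
  intro β
  apply continuousAt_of_dominated (bound := fun _ => 4 + 4 / κ₀)
  · filter_upwards with β'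
    have hc : Continuous (fun v : L2 => dpd κ₀ (H ⟪v, β₀⟫) (H ⟪v, β'⟫)) := by
      rw [continuous_iff_continuousAt]
      intro v
      exact contAt_dpd κ₀
        ((hHcont.comp (continuous_id.inner continuous_const)).continuousAt)
        ((hHcont.comp (continuous_id.inner continuous_const)).continuousAt)
        (hH _) (hH _)
    exact (hc.measurable.comp hX).aestronglyMeasurable
  · filter_upwards with β'
    filter_upwards with ω
    rw [Real.norm_eq_abs]
    exact dpd_bound κ₀ hκ₀ (hH _) (hH _)
  · exact integrable_const _
  · filter_upwards with ω
    exact contAt_dpd κ₀ continuousAt_const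
      ((hHcont.comp (continuous_const.inner continuous_id)).continuousAt)
      (hH _) (hH _)

end
end
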